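/- arXiv:math/0404499 — 2 statements merged into one kernel-verified Lean document; each statement's English description precedes it below -/
import Mathlib

section
/- Let G be a nilpotent group of class two which is minimally generated by elements x₁, …, x_m, where x_i has order 2^(r_i) and 1 ≤ r₁ ≤ r₂ ≤ ⋯ ≤ r_m. If G is capable, then m > 1 and r_m ≤ r_(m-1) + 1. -/
/-!
Write `G ≅ K/Z(K)` and lift the generators to `y i ∈ K`. Since `G` has class two, `γ₃(K) ≤ Z(K)`,
so `⁅a ^ s, b⁆ = ⁅a, b⁆ ^ s * ⁅a, ⁅a, b⁆⁆ ^ (s choose 2)` and its mirror image hold in `K`.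
If `b ^ s` is central, these expansions force `⁅a, b⁆ ^ (2 * s) = ⁅a, ⁅a, b⁆⁆ ^ s = 1`, and hence
`a ^ n` commutes with `b` as soon as `2 * s ∣ n`. With `a` the lift of `x_m` and
`n = 2 ^ (r_{m-1} + 1)`, the element `a ^ n` commutes with every lift and with `Z(K)`, so it is
central and `x_m ^ n = 1`. For `m ≤ 1` the group would be cyclic, hence abelian.
-/

universe u

/-- A group is capable if it is isomorphic to `K/Z(K)` for some group `K`. -/
def IsCapable (G : Type u) [Group G] : Prop :=
  ∃ (K : Type u) (_ : Group K), Nonempty ((K ⧸ Subgroup.center K) ≃* G)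

open scoped commutatorElement
open Subgroup

section CommutatorPowers

variable {K : Type*} [Group K]

theorem commutatorElement_pow_left_of_commute {a b : K} (ha : Commute a ⁅a, ⁅a, b⁆⁆)
    (hb : Commute ⁅a, b⁆ ⁅a, ⁅a, b⁆⁆) (s : ℕ) :
    ⁅a ^ s, b⁆ = ⁅a, b⁆ ^ s * ⁅a, ⁅a, b⁆⁆ ^ s.choose 2 := by
  set c := ⁅a, b⁆
  set d := ⁅a, c⁆
  induction s with
  | zero => simp
  | succ s ih =>
    have hconj : a * c * a⁻¹ = d * c := by simp only [d, commutatorElement_def]; group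
    calc ⁅a ^ (s + 1), b⁆ = MulAut.conj a (c ^ s * d ^ s.choose 2) * c := by
          rw [pow_succ', commutatorElement_mul_left_eq_conj_mul, ih, MulAut.conj_apply]
      _ = (d * c) ^ s * d ^ s.choose 2 * c := by
          rw [map_mul, map_pow, map_pow, MulAut.conj_apply, MulAut.conj_apply, hconj, ha.eq,
            mul_inv_cancel_right]
      _ = c ^ (s + 1) * d ^ (s + 1).choose 2 := by
          rw [hb.symm.mul_pow, mul_assoc (d ^ s), (hb.pow_pow s _).eq, ← mul_assoc, ← pow_add,
            mul_assoc, ← pow_succ, ((hb.pow_pow _ _).eq).symm, Nat.choose_succ_succ',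
            Nat.choose_one_right]

theorem commutatorElement_pow_right_of_commute {a b : K} (ha : Commute b ⁅b, ⁅b, a⁆⁆)
    (hb : Commute ⁅b, a⁆ ⁅b, ⁅b, a⁆⁆) (t : ℕ) :
    ⁅a, b ^ t⁆ = ⁅a, b⁆ ^ t * ⁅b, ⁅b, a⁆⁆⁻¹ ^ t.choose 2 := by
  rw [← commutatorElement_inv, commutatorElement_pow_left_of_commute ha hb, mul_inv_rev, ← inv_pow,
    ← inv_pow, commutatorElement_inv b a]
  have hc := (hb.inv_left.inv_right.pow_pow t (t.choose 2)).eq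
  rwa [commutatorElement_inv b a, eq_comm] at hc

theorem commutatorElement_pow_left_of_mem_center {g c : K} (h : ⁅g, c⁆ ∈ center K) (s : ℕ) :
    ⁅g ^ s, c⁆ = ⁅g, c⁆ ^ s := by
  have hd : ⁅g, ⁅g, c⁆⁆ = 1 := commutatorElement_eq_one_iff_mul_comm.mpr (mem_center_iff.mp h g)
  rw [commutatorElement_pow_left_of_commute (by rw [hd]; exact Commute.one_right g)
    (by rw [hd]; exact Commute.one_right _), hd, one_pow, mul_one]

theorem commutatorElement_pow_right_of_mem_center {g c : K} (h : ⁅g, c⁆ ∈ center K) (s : ℕ) :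
    ⁅g, c ^ s⁆ = ⁅g, c⁆ ^ s := by
  have h' : ⁅c, g⁆ ∈ center K := commutatorElement_inv g c ▸ inv_mem h
  rw [← commutatorElement_inv, commutatorElement_pow_left_of_mem_center h', ← inv_pow,
    commutatorElement_inv]

end CommutatorPowers

theorem Nat.two_mul_choose_two (n : ℕ) : 2 * n.choose 2 = n * (n - 1) := by
  rw [Nat.choose_two_right, Nat.mul_div_cancel' (Nat.even_mul_pred_self n).two_dvd]

theorem Nat.dvd_choose_two_of_two_mul_dvd {s n : ℕ} (h : 2 * s ∣ n) : s ∣ n.choose 2 := by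
  refine Nat.dvd_of_mul_dvd_mul_left two_pos ?_
  rw [Nat.two_mul_choose_two]
  exact h.mul_right _

section ClassAtMostThree

variable {K : Type*} [Group K]

theorem commutatorElement_commutatorElement_mem_center
    (hK : (⊤ : Subgroup K).lowerCentralSeries 2 ≤ center K) (g h k : K) :
    ⁅g, ⁅h, k⁆⁆ ∈ center K := by
  have hmem : ⁅⁅h, k⁆, g⁆ ∈ (⊤ : Subgroup K).lowerCentralSeries 2 :=
    commutator_mem_commutator (commutator_mem_commutator (mem_top h) (mem_top k)) (mem_top g)
  simpa only [commutatorElement_inv] using inv_mem (hK hmem)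

theorem commute_pow_of_pow_mem_center (hK : (⊤ : Subgroup K).lowerCentralSeries 2 ≤ center K)
    {a b : K} {s n : ℕ} (hb : b ^ s ∈ center K) (hn : 2 * s ∣ n) : Commute (a ^ n) b := by
  have central := commutatorElement_commutatorElement_mem_center hK
  have commute_of_mem {z : K} (hz : z ∈ center K) (g : K) : Commute g z := mem_center_iff.mp hz g
  have hd₂ : ⁅b, ⁅b, a⁆⁆ ^ s = 1 := by
    rw [← commutatorElement_pow_left_of_mem_center (central b b a),
      commutatorElement_eq_one_iff_commute]
    exact (commute_of_mem hb _).symm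
  have hc : ⁅a, b⁆ ^ s = ⁅b, ⁅b, a⁆⁆ ^ s.choose 2 := by
    have h1 : ⁅a, b ^ s⁆ = 1 := commutatorElement_eq_one_iff_commute.mpr (commute_of_mem hb a)
    rwa [commutatorElement_pow_right_of_commute (commute_of_mem (central b b a) b)
      (commute_of_mem (central b b a) _), inv_pow, mul_inv_eq_one] at h1
  have hc₂ : ⁅a, b⁆ ^ (2 * s) = 1 := by
    rw [mul_comm, pow_mul, hc, ← pow_mul, mul_comm, Nat.two_mul_choose_two, pow_mul, hd₂, one_pow]
  have hd₁ : ⁅a, ⁅a, b⁆⁆ ^ s = 1 := by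
    rw [← commutatorElement_pow_right_of_mem_center (central a a b), hc,
      commutatorElement_eq_one_iff_commute]
    exact commute_of_mem (pow_mem (central b b a) _) a
  obtain ⟨k, rfl⟩ := hn
  obtain ⟨l, hl⟩ := Nat.dvd_choose_two_of_two_mul_dvd (dvd_mul_right (2 * s) k)
  rw [← commutatorElement_eq_one_iff_commute, commutatorElement_pow_left_of_commute
    (commute_of_mem (central a a b) a) (commute_of_mem (central a a b) _), pow_mul, hc₂, one_pow,
    hl, pow_mul, hd₁, one_pow, one_mul]

end ClassAtMostThree

theorem Subgroup.lowerCentralSeries_le_ker {K G : Type*} [Group K] [Group G] {f : K →* G}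
    (hf : Function.Surjective f) {n : ℕ} (h : (⊤ : Subgroup G).lowerCentralSeries n = ⊥) :
    (⊤ : Subgroup K).lowerCentralSeries n ≤ f.ker := by
  rw [← map_eq_bot_iff, map_lowerCentralSeries, map_top_of_surjective f hf, h]

theorem mem_center_of_commute_of_closure_image_eq_top {K G : Type*} [Group K] [Group G]
    (f : K →* G) (hker : f.ker ≤ center K) {S : Set K} (hS : closure (f '' S) = ⊤) {z : K}
    (hz : ∀ s ∈ S, Commute z s) : z ∈ center K := by
  have htop : closure S ⊔ f.ker = ⊤ := by rw [← comap_map_eq, MonoidHom.map_closure, hS, comap_top]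
  have hle : closure S ⊔ f.ker ≤ centralizer {z} :=
    sup_le (closure_le _ |>.mpr fun s hs => mem_centralizer_singleton_iff.mpr (hz s hs).eq.symm)
      (hker.trans (center_le_centralizer _))
  exact mem_center_iff.mpr fun g => mem_centralizer_singleton_iff.mp (hle (htop ▸ mem_top g))

theorem IsCapable.exists_surjective_ker_eq_center {G : Type u} [Group G] (h : IsCapable G) :
    ∃ (K : Type u) (_ : Group K) (f : K →* G), Function.Surjective f ∧ f.ker = center K := by
  obtain ⟨K, _, ⟨e⟩⟩ := h
  exact ⟨K, _, (e : K ⧸ center K →* G).comp (QuotientGroup.mk' _),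
    e.surjective.comp (QuotientGroup.mk'_surjective _),
    by rw [MonoidHom.ker_mulEquiv_comp, QuotientGroup.ker_mk']⟩

theorem IsCapable.pow_eq_one_of_two_mul_orderOf_dvd {G : Type u} [Group G] {ι : Type*}
    {x : ι → G} (hcap : IsCapable G) (hclass2 : (⊤ : Subgroup G).lowerCentralSeries 2 = ⊥)
    (hgen : closure (Set.range x) = ⊤) {i : ι} {n : ℕ}
    (hn : ∀ j, j ≠ i → 2 * orderOf (x j) ∣ n) : x i ^ n = 1 := by
  obtain ⟨K, _, f, hf, hker⟩ := hcap.exists_surjective_ker_eq_center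
  choose y hy using fun j => hf (x j)
  have hK : (⊤ : Subgroup K).lowerCentralSeries 2 ≤ center K :=
    hker ▸ lowerCentralSeries_le_ker hf hclass2
  have hcentral : y i ^ n ∈ center K := by
    refine mem_center_of_commute_of_closure_image_eq_top f hker.le (S := Set.range y) ?_ ?_
    · rwa [← Set.range_comp, show f ∘ y = x from funext hy]
    · rintro _ ⟨j, rfl⟩
      obtain rfl | hj := eq_or_ne j i
      · exact (Commute.refl _).pow_left n
      · refine commute_pow_of_pow_mem_center hK ?_ (hn j hj)
        rw [← hker, MonoidHom.mem_ker, map_pow, hy, pow_orderOf_eq_one]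
  rw [← hy, ← map_pow, ← MonoidHom.mem_ker, hker]
  exact hcentral

theorem isCyclic_of_closure_eq_top {G : Type*} [Group G] {s : Set G} (hs : s.Subsingleton)
    (h : closure s = ⊤) : IsCyclic G := by
  rw [isCyclic_iff_exists_zpowers_eq_top]
  obtain rfl | ⟨g, rfl⟩ := hs.eq_empty_or_singleton
  · exact ⟨1, by rw [zpowers_one_eq_bot, ← h, Subgroup.closure_empty]⟩
  · exact ⟨g, by rw [zpowers_eq_closure, h]⟩

/-- Let `G` be a nilpotent group of class two, minimally generated by `x₁, …, x_m`
with `orderOf (x i) = 2 ^ r i` and `1 ≤ r₁ ≤ ⋯ ≤ r_m`.  If `G` is capable then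
`m > 1` and `r_m ≤ r_{m-1} + 1`. -/
theorem capable_class_two_order_condition {G : Type u} [Group G] {m : ℕ}
    (x : Fin m → G) (r : Fin m → ℕ)
    (hgen : Subgroup.closure (Set.range x) = ⊤)
    (hmono : Monotone r)
    (hord : ∀ i, orderOf (x i) = 2 ^ r i)
    (hclass2 : (⊤ : Subgroup G).lowerCentralSeries 2 = ⊥)
    (hnonab : (⊤ : Subgroup G).lowerCentralSeries 1 ≠ ⊥)
    (hcap : IsCapable G) :
    ∃ hm : 1 < m, r ⟨m - 1, by omega⟩ ≤ r ⟨m - 2, by omega⟩ + 1 := by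
  have hm : 1 < m := by
    by_contra! hm
    have : Subsingleton (Fin m) := Fin.subsingleton_iff_le_one.mpr hm
    have : IsCyclic G := isCyclic_of_closure_eq_top (Set.subsingleton_range x) hgen
    exact hnonab (lowerCentralSeries_one_eq_bot_iff.mpr inferInstance)
  refine ⟨hm, ?_⟩
  have hpow : x ⟨m - 1, by omega⟩ ^ 2 ^ (r ⟨m - 2, by omega⟩ + 1) = 1 := by
    refine hcap.pow_eq_one_of_two_mul_orderOf_dvd hclass2 hgen fun j hj => ?_
    have hj' : (j : ℕ) ≤ m - 2 := by
      have := j.isLt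
      have : (j : ℕ) ≠ m - 1 := fun h => hj (Fin.ext h)
      omega
    rw [hord, ← pow_succ']
    exact Nat.pow_dvd_pow 2 (Nat.succ_le_succ (hmono (Fin.le_def.mpr hj')))
  have hdvd := orderOf_dvd_of_pow_eq_one hpow
  rwa [hord, Nat.pow_dvd_pow_iff_le_right one_lt_two] at hdvd
end

section
/- Let K be a group of nilpotency class at most three, let N be a central subgroup of K such that K/N is isomorphic to the group G presented by ⟨a,b | a^(2^(γ+1)) = b^(2^(γ+1)) = [a,b]^(2^γ) = [a,b,a] = [a,b,b] = e, a^(2^γ) = b^(2^γ) = [a,b]^(2^(γ-1))⟩ with γ ≥ 1, and let x, y ∈ K project to a and b respectively. Then x^(2^γ) ∈ Z(K) but x^(2^γ) ∉ N; in particular N ≠ Z(K). -/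
/-
Modulo `N`, both `x ^ 2 ^ γ` and `y ^ 2 ^ γ` map to `[a, b] ^ 2 ^ (γ - 1)`, so they differ by an
element of the central subgroup `N`. Hence `x ^ 2 ^ γ` commutes with `x`, with `y` and with `N`,
which together generate `K`. It does not lie in `N` because `a ^ 2 ^ γ ≠ e` in `G`: a concrete group
satisfying the relations, a quotient of a Heisenberg group over `ZMod (2 ^ (γ + 1))` by a central
subgroup, witnesses this.
-/

/-- The paper's commutator convention: `[x,y] = x⁻¹y⁻¹xy`. -/
def pcomm {G : Type*} [Group G] (x y : G) : G := x⁻¹ * y⁻¹ * x * y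

/-- Relators of the type (iii) (exceptional type) presentation
`⟨a,b | a^(2^(γ+1)) = b^(2^(γ+1)) = [a,b]^(2^γ) = [a,b,a] = [a,b,b] = e,
  a^(2^γ) = b^(2^γ) = [a,b]^(2^(γ-1))⟩`. -/
def relsIII (γ : ℕ) : Set (FreeGroup (Fin 2)) :=
  let a : FreeGroup (Fin 2) := FreeGroup.of 0
  let b : FreeGroup (Fin 2) := FreeGroup.of 1
  {a ^ 2 ^ (γ + 1), b ^ 2 ^ (γ + 1), pcomm a b ^ 2 ^ γ,
    pcomm (pcomm a b) a, pcomm (pcomm a b) b,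
    a ^ 2 ^ γ * (pcomm a b ^ 2 ^ (γ - 1))⁻¹,
    b ^ 2 ^ γ * (pcomm a b ^ 2 ^ (γ - 1))⁻¹}

theorem pcomm_eq_one_iff {G : Type*} [Group G] {a b : G} : pcomm a b = 1 ↔ Commute a b := by
  rw [pcomm, mul_assoc, ← mul_inv_rev, inv_mul_eq_one, eq_comm]
  rfl

theorem map_pcomm {G H : Type*} [Group G] [Group H] (f : G →* H) (a b : G) :
    f (pcomm a b) = pcomm (f a) (f b) := by
  simp only [pcomm, map_mul, map_inv]

/-- The Heisenberg group over `ZMod n` with its cocycle doubled, so that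
`pcomm genA genB = ⟨0, 0, -2⟩`: for `n = 2 ^ (γ + 1)` the commutator has order `2 ^ γ`,
as in the exceptional type group. -/
@[ext]
structure DoubledHeisenberg (n : ℕ) where
  x : ZMod n
  y : ZMod n
  z : ZMod n

namespace DoubledHeisenberg

variable {n : ℕ}

instance : Mul (DoubledHeisenberg n) :=
  ⟨fun g h => ⟨g.x + h.x, g.y + h.y, g.z + h.z + 2 * g.y * h.x⟩⟩
instance : One (DoubledHeisenberg n) := ⟨⟨0, 0, 0⟩⟩
instance : Inv (DoubledHeisenberg n) := ⟨fun g => ⟨-g.x, -g.y, -g.z + 2 * g.y * g.x⟩⟩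

@[simp] theorem mul_x (g h : DoubledHeisenberg n) : (g * h).x = g.x + h.x := rfl
@[simp] theorem mul_y (g h : DoubledHeisenberg n) : (g * h).y = g.y + h.y := rfl
@[simp] theorem mul_z (g h : DoubledHeisenberg n) : (g * h).z = g.z + h.z + 2 * g.y * h.x := rfl
@[simp] theorem one_x : (1 : DoubledHeisenberg n).x = 0 := rfl
@[simp] theorem one_y : (1 : DoubledHeisenberg n).y = 0 := rfl
@[simp] theorem one_z : (1 : DoubledHeisenberg n).z = 0 := rfl
@[simp] theorem inv_x (g : DoubledHeisenberg n) : g⁻¹.x = -g.x := rfl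
@[simp] theorem inv_y (g : DoubledHeisenberg n) : g⁻¹.y = -g.y := rfl
@[simp] theorem inv_z (g : DoubledHeisenberg n) : g⁻¹.z = -g.z + 2 * g.y * g.x := rfl

instance : Group (DoubledHeisenberg n) where
  mul_assoc a b c := by ext <;> simp only [mul_x, mul_y, mul_z] <;> ring
  one_mul a := by ext <;> simp
  mul_one a := by ext <;> simp
  inv_mul_cancel a := by
    ext <;> simp only [mul_x, mul_y, mul_z, inv_x, inv_y, inv_z, one_x, one_y, one_z] <;> ring

theorem pow_eq_of_y_mul_x_eq_zero (g : DoubledHeisenberg n) (hg : g.y * g.x = 0) (k : ℕ) :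
    g ^ k = ⟨k * g.x, k * g.y, k * g.z⟩ := by
  induction k with
  | zero => ext <;> simp
  | succ k ih =>
    rw [pow_succ, ih]
    ext <;> simp only [mul_x, mul_y, mul_z] <;> push_cast
    · ring
    · ring
    · linear_combination (2 * k) * hg

theorem mem_center_of_two_mul (g : DoubledHeisenberg n) (hx : 2 * g.x = 0) (hy : 2 * g.y = 0) :
    g ∈ Subgroup.center (DoubledHeisenberg n) := by
  refine Subgroup.mem_center_iff.2 fun h => ?_
  ext <;> simp only [mul_x, mul_y, mul_z]
  · ring
  · ring
  · linear_combination h.y * hx - h.x * hy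

/-- For `n = 2 ^ (γ + 1)` this contains the images of the relators `relsIII γ` under
`a ↦ genA, b ↦ genB`, but not `genA ^ 2 ^ γ`. -/
def centralSumZero (n : ℕ) : Subgroup (DoubledHeisenberg n) where
  carrier := {g | 2 * g.x = 0 ∧ 2 * g.y = 0 ∧ g.x + g.y + g.z = 0}
  one_mem' := by simp
  mul_mem' := by
    rintro g h ⟨hgx, hgy, hg⟩ ⟨hhx, hhy, hh⟩
    refine ⟨?_, ?_, ?_⟩ <;> simp only [mul_x, mul_y, mul_z]
    · linear_combination hgx + hhx
    · linear_combination hgy + hhy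
    · linear_combination hg + hh + h.x * hgy
  inv_mem' := by
    rintro g ⟨hgx, hgy, hg⟩
    refine ⟨?_, ?_, ?_⟩ <;> simp only [inv_x, inv_y, inv_z]
    · linear_combination -hgx
    · linear_combination -hgy
    · linear_combination -hg + g.x * hgy

theorem centralSumZero_le_center : centralSumZero n ≤ Subgroup.center (DoubledHeisenberg n) :=
  fun g hg => mem_center_of_two_mul g hg.1 hg.2.1

instance : (centralSumZero n).Normal :=
  ⟨fun g hg k => by
    rw [Subgroup.mem_center_iff.1 (centralSumZero_le_center hg) k, mul_inv_cancel_right]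
    exact hg⟩

def genA : DoubledHeisenberg n := ⟨1, 0, 0⟩
def genB : DoubledHeisenberg n := ⟨0, 1, 0⟩

theorem genA_pow (k : ℕ) : (genA : DoubledHeisenberg n) ^ k = ⟨k, 0, 0⟩ := by
  rw [pow_eq_of_y_mul_x_eq_zero _ (zero_mul _)]
  simp [genA]

theorem genB_pow (k : ℕ) : (genB : DoubledHeisenberg n) ^ k = ⟨0, k, 0⟩ := by
  rw [pow_eq_of_y_mul_x_eq_zero _ (mul_zero _)]
  simp [genB]

theorem pcomm_genA_genB : pcomm (genA : DoubledHeisenberg n) genB = ⟨0, 0, -2⟩ := by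
  ext <;> simp [pcomm, genA, genB]

theorem mk_zero_zero_commute (t : ZMod n) (g : DoubledHeisenberg n) :
    Commute (⟨0, 0, t⟩ : DoubledHeisenberg n) g :=
  Subgroup.mem_center_iff.1 (mem_center_of_two_mul _ (mul_zero _) (mul_zero _)) g |>.symm

theorem lift_mem_centralSumZero_of_mem_relsIII {γ : ℕ} (hγ : 1 ≤ γ) :
    ∀ r ∈ relsIII γ, FreeGroup.lift ![genA, genB] r ∈ centralSumZero (2 ^ (γ + 1)) := by
  obtain ⟨k, rfl⟩ : ∃ k, γ = k + 1 := ⟨γ - 1, by omega⟩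
  have h2 : (2 : ZMod (2 ^ (k + 2))) ^ (k + 2) = 0 := by exact_mod_cast ZMod.natCast_self _
  have hc : ∀ m : ℕ, (⟨0, 0, -2⟩ : DoubledHeisenberg (2 ^ (k + 2))) ^ m = ⟨0, 0, -2 * m⟩ := by
    intro m
    rw [pow_eq_of_y_mul_x_eq_zero _ (mul_zero _)]
    ext <;> simp
    ring
  simp only [relsIII, Set.mem_insert_iff, Set.mem_singleton_iff]
  rintro r (rfl | rfl | rfl | rfl | rfl | rfl | rfl) <;>
    simp only [map_pow, map_mul, map_inv, map_pcomm, FreeGroup.lift_apply_of,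
      Matrix.cons_val_zero, Matrix.cons_val_one, genA_pow, genB_pow, pcomm_genA_genB, hc,
      pcomm_eq_one_iff.2 (mk_zero_zero_commute _ _)]
  all_goals first
    | exact one_mem _
    | refine ⟨?_, ?_, ?_⟩ <;> simp only [mul_x, mul_y, mul_z, inv_x, inv_y, inv_z] <;>
        push_cast <;> grind

theorem genA_pow_two_pow_notMem_centralSumZero (γ : ℕ) :
    (genA : DoubledHeisenberg (2 ^ (γ + 1))) ^ 2 ^ γ ∉ centralSumZero (2 ^ (γ + 1)) := by
  rintro ⟨-, -, h⟩
  rw [genA_pow, add_zero, add_zero, ZMod.natCast_eq_zero_iff,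
    Nat.pow_dvd_pow_iff_le_right one_lt_two] at h
  omega

end DoubledHeisenberg

open DoubledHeisenberg in
theorem of_zero_pow_ne_one {γ : ℕ} (hγ : 1 ≤ γ) :
    (PresentedGroup.of 0 : PresentedGroup (relsIII γ)) ^ 2 ^ γ ≠ 1 := by
  let π := QuotientGroup.mk' (centralSumZero (2 ^ (γ + 1)))
  have hrels : ∀ r ∈ relsIII γ, FreeGroup.lift (π ∘ ![genA, genB]) r = 1 := fun r hr => by
    rw [← FreeGroup.lift_unique (π.comp (FreeGroup.lift ![genA, genB])) (fun i => by simp),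
      MonoidHom.comp_apply, QuotientGroup.mk'_apply, QuotientGroup.eq_one_iff]
    exact lift_mem_centralSumZero_of_mem_relsIII hγ r hr
  intro h
  apply genA_pow_two_pow_notMem_centralSumZero γ
  rw [← QuotientGroup.eq_one_iff, QuotientGroup.mk_pow]
  simpa [π] using congrArg (PresentedGroup.toGroup hrels) h

theorem of_zero_pow_eq_of_one_pow (γ : ℕ) :
    (PresentedGroup.of 0 : PresentedGroup (relsIII γ)) ^ 2 ^ γ = PresentedGroup.of 1 ^ 2 ^ γ := by
  have hmem {i : Fin 2} (hi : FreeGroup.of i ^ 2 ^ γ *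
      (pcomm (FreeGroup.of 0) (FreeGroup.of 1) ^ 2 ^ (γ - 1))⁻¹ ∈ relsIII γ) :
      (PresentedGroup.of i : PresentedGroup (relsIII γ)) ^ 2 ^ γ =
        PresentedGroup.mk _ (pcomm (FreeGroup.of 0) (FreeGroup.of 1) ^ 2 ^ (γ - 1)) := by
    rw [PresentedGroup.of, ← map_pow]
    exact PresentedGroup.mk_eq_mk_of_mul_inv_mem hi
  rw [hmem (by simp [relsIII]), hmem (by simp [relsIII])]

theorem commute_of_inv_mul_mem_center {G : Type*} [Group G] {a b c : G}
    (h : a⁻¹ * b ∈ Subgroup.center G) (hb : Commute b c) : Commute a c := by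
  rw [show a = b * (a⁻¹ * b)⁻¹ by group]
  exact hb.mul_left (Subgroup.mem_center_iff.1 (inv_mem h) c).symm

theorem mem_center_of_forall_commute {G Q : Type*} [Group G] [Group Q] (f : G →* Q)
    (hf : f.ker ≤ Subgroup.center G) {s : Set G} (hs : Subgroup.closure (f '' s) = ⊤) {g : G}
    (hg : ∀ k ∈ s, Commute g k) : g ∈ Subgroup.center G := by
  have hker : f.ker ≤ Subgroup.centralizer {g} := fun k hk =>
    Subgroup.mem_centralizer_singleton_iff.2 (Subgroup.mem_center_iff.1 (hf hk) g).symm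
  have hs' : s ⊆ Subgroup.centralizer {g} := fun k hk =>
    Subgroup.mem_centralizer_singleton_iff.2 (hg k hk).symm
  have htop : Subgroup.centralizer {g} = ⊤ := by
    rw [← sup_eq_left.2 hker, ← Subgroup.comap_map_eq, eq_top_iff, ← Subgroup.comap_top f, ← hs,
      ← MonoidHom.map_closure]
    exact Subgroup.comap_mono (Subgroup.map_mono (Subgroup.closure_le _ |>.2 hs'))
  exact Subgroup.centralizer_eq_top_iff_subset.1 htop rfl

theorem exceptional_type_central_quotient_obstruction_general
    (γ : ℕ) (hγ : 1 ≤ γ) (K : Type*) [Group K]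
    (N : Subgroup K) [N.Normal] (hNcentral : N ≤ Subgroup.center K)
    (φ : (K ⧸ N) ≃* PresentedGroup (relsIII γ))
    (x y : K)
    (hx : φ (QuotientGroup.mk x) = PresentedGroup.of 0)
    (hy : φ (QuotientGroup.mk y) = PresentedGroup.of 1) :
    x ^ 2 ^ γ ∈ Subgroup.center K ∧ x ^ 2 ^ γ ∉ N ∧ N ≠ Subgroup.center K := by
  set f : K →* PresentedGroup (relsIII γ) := φ.toMonoidHom.comp (QuotientGroup.mk' N)
  have hker : f.ker = N := by
    rw [MonoidHom.ker_comp_of_injective _ _ φ.injective, QuotientGroup.ker_mk']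
  have hxN : x ^ 2 ^ γ ∉ N := by
    rw [← hker, MonoidHom.mem_ker, map_pow]
    exact hx ▸ of_zero_pow_ne_one hγ
  have hxyN : (x ^ 2 ^ γ)⁻¹ * y ^ 2 ^ γ ∈ N := by
    rw [← hker, MonoidHom.mem_ker, map_mul, map_inv, map_pow, map_pow, inv_mul_eq_one]
    exact hx ▸ hy ▸ of_zero_pow_eq_of_one_pow γ
  have hxZ : x ^ 2 ^ γ ∈ Subgroup.center K := by
    refine mem_center_of_forall_commute f (hker ▸ hNcentral) (s := Set.range ![x, y]) ?_ ?_
    · rw [← Set.range_comp, ← PresentedGroup.closure_range_of]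
      congr 2
      funext i
      fin_cases i
      exacts [hx, hy]
    · rintro _ ⟨i, rfl⟩
      fin_cases i
      exacts [(Commute.refl x).pow_left _,
        commute_of_inv_mul_mem_center (hNcentral hxyN) ((Commute.refl y).pow_left _)]
  exact ⟨hxZ, hxN, fun h => hxN (h ▸ hxZ)⟩

/-- If `K` has class at most three, `N` is a central subgroup of `K` with `K/N`
isomorphic to the exceptional type group `G`, and `x, y ∈ K` project to the
generators `a, b` of `G`, then `x^(2^γ)` is central in `K` but not in `N`;
in particular `N ≠ Z(K)`. -/
theorem exceptional_type_central_quotient_obstruction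
    (γ : ℕ) (hγ : 1 ≤ γ) (K : Type*) [Group K]
    (hclass3 : (⊤ : Subgroup K).lowerCentralSeries 3 = ⊥)
    (N : Subgroup K) [N.Normal] (hNcentral : N ≤ Subgroup.center K)
    (φ : (K ⧸ N) ≃* PresentedGroup (relsIII γ))
    (x y : K)
    (hx : φ (QuotientGroup.mk x) = PresentedGroup.of 0)
    (hy : φ (QuotientGroup.mk y) = PresentedGroup.of 1) :
    x ^ 2 ^ γ ∈ Subgroup.center K ∧ x ^ 2 ^ γ ∉ N ∧ N ≠ Subgroup.center K :=
  exceptional_type_central_quotient_obstruction_general γ hγ K N hNcentral φ x y hx hy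
end
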